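/- Let G* be a k-bound 𝔯-partite graph on nonempty finite probability spaces (Ω_i) that is (ε,h)-regular with witness function δ, let α ∈ (0,1), and for 1 ≤ i ≤ k set b_i* := max over indices J ⊆ 𝔯 with i ≤ |J| ≤ k of |C_J(G*)| and ρ_i := α/b_i*, and let η_i > 0 be reals with ε(i, b_i*) ≤ α · ρ_i · η_i. Call an edge e ∈ Ω_I with |I| = i exceptional iff d_{G*}(G*⟨e⟩) < ρ_i or δ(G*⟨e⟩) > ρ_i · η_i. Then for every nonempty index I ⊆ 𝔯 with |I| ≤ k, the probability that a random edge e ∈ Ω_I (components chosen independently according to the measures of the Ω_i) is exceptional is at most 2α. -/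

import Mathlib

open scoped Classical BigOperators

noncomputable section

/-- Probability weights on the vertex classes `Ω i`: each `Ω i` is a finite
probability space. -/
structure ProbWeight {ι : Type} (Ω : ι → Type) [∀ i, Fintype (Ω i)] where
  p : ∀ i, Ω i → ℝ
  nonneg : ∀ i x, 0 ≤ p i x
  sum_one : ∀ i, ∑ x, p i x = 1

/-- A `k`-bound colored `ι`-partite (hyper)graph on the vertex sets `Ω i`.
For each nonempty index `I ⊆ ι` with `|I| ≤ k`, every index-`I` edge
(an element of `Ω_I`, encoded as a dependent function on `I`) receives a color
from the color set `colorSet I`. -/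
structure PartGraph (ι : Type) [Fintype ι] [DecidableEq ι] (Ω : ι → Type)
    [∀ i, Fintype (Ω i)] (k : ℕ) where
  colorSet : Finset ι → Finset ℕ
  col : (I : Finset ι) → ((i : {x // x ∈ I}) → Ω i.1) → ℕ
  col_mem : ∀ (I : Finset ι), I.Nonempty → I.card ≤ k →
    ∀ e, col I e ∈ colorSet I

variable {ι : Type} [Fintype ι] [DecidableEq ι] {Ω : ι → Type} [∀ i, Fintype (Ω i)]
  {k : ℕ}

/-- `(b_i)`-colored: the index-`I` color set has at most `b_{|I|}` elements. -/
def PartGraph.Bounded (G : PartGraph ι Ω k) (b : ℕ → ℕ) : Prop :=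
  ∀ I : Finset ι, I.Nonempty → I.card ≤ k → (G.colorSet I).card ≤ b I.card

/-- Probability, over a random edge `e ∈ Ω_I` whose components are chosen
independently according to the measures of the `Ω i`, of the event `A`. -/
def probI (P : ProbWeight Ω) (I : Finset ι)
    (A : ((i : {x // x ∈ I}) → Ω i.1) → Prop) : ℝ :=
  ∑ e : (i : {x // x ∈ I}) → Ω i.1,
    (∏ i, P.p i.1 (e i)) * (if A e then 1 else 0)

/-- Expectation, over a random edge `e ∈ Ω_I`, of `f`. -/
def expI (P : ProbWeight Ω) (I : Finset ι)
    (f : ((i : {x // x ∈ I}) → Ω i.1) → ℝ) : ℝ :=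
  ∑ e : (i : {x // x ∈ I}) → Ω i.1, (∏ i, P.p i.1 (e i)) * f e

/-- The total color `G⟨e⟩` of an edge `e ∈ Ω_I`: the tuple of colors of all the
restrictions `e|_J` for nonempty `J ⊆ I` (encoded as a function on `Finset ι`,
with junk value `0` outside its domain). -/
def PartGraph.tc (G : PartGraph ι Ω k) (I : Finset ι)
    (e : (i : {x // x ∈ I}) → Ω i.1) : Finset ι → ℕ := fun J =>
  if h : J ⊆ I ∧ J.Nonempty then G.col J (fun j => e ⟨j.1, h.1 j.2⟩) else 0

/-- The relative density `d_G(c⃗)` of a total color `c⃗` of index `I`: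
the conditional probability that a random edge `e ∈ Ω_I` has color `c I`
given that all its proper restrictions have the colors prescribed by `c`. -/
def dens (G : PartGraph ι Ω k) (P : ProbWeight Ω) (I : Finset ι)
    (c : Finset ι → ℕ) : ℝ :=
  probI P I (fun e => G.col I e = c I ∧ ∀ J, J ⊂ I → J.Nonempty → G.tc I e J = c J) /
    probI P I (fun e => ∀ J, J ⊂ I → J.Nonempty → G.tc I e J = c J)

/-- A `k`-bound `ι`-partite (simplicial) complex: a finite vertex type `V`
partitioned into classes by `part`, a downward closed family `vis` of visible
edges (nonempty partitionwise subsets of `V` of size at most `k`), and a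
coloring `col` of the (visible) edges.  (Edges outside `vis` are invisible.) -/
structure PartComplex (ι : Type) [Fintype ι] [DecidableEq ι] (k : ℕ) where
  V : Type
  [fintypeV : Fintype V]
  [decEqV : DecidableEq V]
  part : V → ι
  vis : Finset (Finset V)
  vis_nonempty : ∀ e ∈ vis, e.Nonempty
  vis_card : ∀ e ∈ vis, e.card ≤ k
  vis_part : ∀ e ∈ vis, Set.InjOn part ↑e
  vis_down : ∀ e ∈ vis, ∀ f ⊆ e, f.Nonempty → f ∈ vis
  col : Finset V → ℕ

attribute [instance] PartComplex.fintypeV PartComplex.decEqV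

/-- The index-`I` edge of `G`'s vertex sets obtained as the image of an edge `e`
of a complex under a partitionwise map `φ`. -/
def PartComplex.edgeMap (B : PartComplex ι k) (Ω : ι → Type)
    (φ : ∀ v : B.V, Ω (B.part v)) (e : Finset B.V) :
    (i : {x // x ∈ e.image B.part}) → Ω i.1 := fun i =>
  cast (congrArg Ω (Finset.mem_image.mp i.2).choose_spec.2)
    (φ (Finset.mem_image.mp i.2).choose)

/-- The total color `B⟨e⟩` of an edge `e` of a complex `B` (under the standing
identification of colors of `B` with colors of an ambient graph). -/
def PartComplex.btc (B : PartComplex ι k) (e : Finset B.V) : Finset ι → ℕ := fun J =>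
  if J ⊆ e.image B.part ∧ J.Nonempty then
    B.col (e.filter (fun v => B.part v ∈ J)) else 0

/-- Probability that a random partitionwise map on the vertices of `B`
(each vertex sent independently according to the measure of its class)
satisfies `A`. -/
def probV (B : PartComplex ι k) (P : ProbWeight Ω)
    (A : (∀ v : B.V, Ω (B.part v)) → Prop) : ℝ :=
  ∑ φ : ∀ v : B.V, Ω (B.part v),
    (∏ v, P.p (B.part v) (φ v)) * (if A φ then 1 else 0)

/-- Conditional probability of `A` given `C`, for a random partitionwise map. -/
def condProbV (B : PartComplex ι k) (P : ProbWeight Ω)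
    (A C : (∀ v : B.V, Ω (B.part v)) → Prop) : ℝ :=
  probV B P (fun φ => A φ ∧ C φ) / probV B P C

/-- Conditional expectation of `f` given `C`, for a random partitionwise map. -/
def condExpV (B : PartComplex ι k) (P : ProbWeight Ω)
    (f : (∀ v : B.V, Ω (B.part v)) → ℝ)
    (C : (∀ v : B.V, Ω (B.part v)) → Prop) : ℝ :=
  (∑ φ : ∀ v : B.V, Ω (B.part v),
    (∏ v, P.p (B.part v) (φ v)) * (if C φ then f φ else 0)) / probV B P C

/-- `φ` embeds the complex `B` into `G`, as far as the edges in the family `F`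
are concerned: every edge of `F` is mapped to an edge of `G` of the same color. -/
def EmbedsF (B : PartComplex ι k) (G : PartGraph ι Ω k)
    (F : Finset (Finset B.V)) (φ : ∀ v : B.V, Ω (B.part v)) : Prop :=
  ∀ e ∈ F, G.col (e.image B.part) (B.edgeMap Ω φ e) = B.col e

/-- `B ↪_φ G` : all visible edges of `B` keep their colors. -/
def Embeds (B : PartComplex ι k) (G : PartGraph ι Ω k)
    (φ : ∀ v : B.V, Ω (B.part v)) : Prop :=
  EmbedsF B G B.vis φ

/-- `S ∈ 𝒮_{r,k,h,G}`: `S` has exactly `h` vertices in each of the vertex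
classes, and the visible colors of `S` are (identified with) colors of `G`
of the same index. -/
def memS (S : PartComplex ι k) (G : PartGraph ι Ω k) (h : ℕ) : Prop :=
  (∀ i : ι, (Finset.univ.filter (fun v => S.part v = i)).card = h) ∧
  ∀ e ∈ S.vis, S.col e ∈ G.colorSet (e.image S.part)

/-- `max_{J : |J| ≥ s} |C_J(G)|`. -/
def maxColors (G : PartGraph ι Ω k) (s : ℕ) : ℕ :=
  (Finset.univ.filter
    (fun J : Finset ι => J.Nonempty ∧ s ≤ J.card ∧ J.card ≤ k)).sup
    (fun J => (G.colorSet J).card)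

/-- `G` is `(ε,h)`-regular with witness function `δ` (assigning a nonnegative
real to each total color of `G`):
(i) for every complex `S ∈ 𝒮_{k,h,G}`, the probability that a random
partitionwise map embeds `S` in `G` is `∏_{e ∈ 𝕍(S)} (d_G(S⟨e⟩) ±̇ δ(S⟨e⟩))`;
(ii) for every index `I`, `𝔼_{e ∈ Ω_I} δ(G⟨e⟩) ≤ ε(|I|, max_{|J| ≥ |I|} |C_J(G)|)`. -/
def IsRegularWitness (G : PartGraph ι Ω k) (P : ProbWeight Ω)
    (ε : ℕ → ℕ → ℝ) (h : ℕ)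
    (δ : Finset ι → (Finset ι → ℕ) → ℝ) : Prop :=
  (∀ I c, 0 ≤ δ I c) ∧
  (∀ S : PartComplex ι k, memS S G h →
    ∃ c : Finset S.V → ℝ,
      probV S P (fun φ => Embeds S G φ) = ∏ e ∈ S.vis, c e ∧
      ∀ e ∈ S.vis,
        max 0 (dens G P (e.image S.part) (S.btc e) - δ (e.image S.part) (S.btc e))
          ≤ c e ∧
        c e ≤ min 1 (dens G P (e.image S.part) (S.btc e) +
          δ (e.image S.part) (S.btc e))) ∧
  (∀ I : Finset ι, I.Nonempty → I.card ≤ k →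
    expI P I (fun e => δ I (G.tc I e)) ≤ ε I.card (maxColors G I.card))

/-- `G` is `(ε,h)`-regular. -/
def IsEpsRegular (G : PartGraph ι Ω k) (P : ProbWeight Ω)
    (ε : ℕ → ℕ → ℝ) (h : ℕ) : Prop :=
  ∃ δ, IsRegularWitness G P ε h δ

/-- `G*` is a subdivision of `G`: size-`k` edges keep their colors, and the
coloring of smaller edges refines that of `G`. -/
def IsSubdivision (G Gs : PartGraph ι Ω k) : Prop :=
  (∀ I : Finset ι, I.card = k → ∀ e, Gs.col I e = G.col I e) ∧
  (∀ I : Finset ι, I.Nonempty → I.card < k →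
    ∀ e e', Gs.col I e = Gs.col I e' → G.col I e = G.col I e')

end

/-! A large witness value is rare by Markov's inequality, since
`𝔼 δ(G*⟨e⟩) ≤ ε(i, b_i*) ≤ α · ρ_i η_i`.  A small relative density is rare because, conditioned on
the colors of the proper restrictions of `e`, the colors of `e` itself of conditional probability
`< ρ_i` have total conditional probability `≤ ρ_i |C_I(G*)| ≤ ρ_i b_i* = α`. -/

namespace Finset

variable {X β γ : Type*} [Fintype X] {w : X → ℝ}

theorem mul_sum_filter_lt_le_sum_mul (hw : ∀ x, 0 ≤ w x) {f : X → ℝ} (hf : ∀ x, 0 ≤ f x)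
    (t : ℝ) : t * ∑ x with t < f x, w x ≤ ∑ x, w x * f x := by
  rw [mul_sum, sum_filter]
  refine sum_le_sum fun x _ => ?_
  split_ifs with hx
  · rw [mul_comm]; exact mul_le_mul_of_nonneg_left hx.le (hw x)
  · exact mul_nonneg (hw x) (hf x)

theorem sum_filter_condWeight_lt_le (hw : ∀ x, 0 ≤ w x) (f : X → β) (p : X → Prop)
    {ρ : ℝ} (hρ : 0 ≤ ρ) :
    ∑ x with p x ∧
        (∑ y with f y = f x ∧ p y, w y) / (∑ y with f y = f x, w y) < ρ, w x ≤
      ρ * ∑ x, w x := by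
  set F : β → ℝ := fun b => ∑ y with f y = b, w y
  set H : β → ℝ := fun b => ∑ y with f y = b ∧ p y, w y
  have hfiber : ∀ b, ∑ x with f x = b, (if p x ∧ H b / F b < ρ then w x else 0) ≤ ρ * F b := by
    intro b
    have hHF : H b ≤ F b :=
      sum_le_sum_of_subset_of_nonneg (monotone_filter_right _ fun _ _ h => h.1) fun x _ _ => hw x
    have hH : 0 ≤ H b := sum_nonneg fun x _ => hw x
    by_cases hlt : H b / F b < ρ
    · have : ∑ x with f x = b, (if p x ∧ H b / F b < ρ then w x else 0) = H b := by
        simp only [hlt, and_true, ← sum_filter, filter_filter, H]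
      rw [this]
      rcases (hH.trans hHF).eq_or_lt with hF0 | hFpos
      · rw [← hF0] at hHF ⊢; simpa using hHF
      · exact ((div_lt_iff₀ hFpos).mp hlt).le
    · simp only [hlt, and_false, if_false, sum_const_zero]
      exact mul_nonneg hρ (hH.trans hHF)
  calc ∑ x with p x ∧ H (f x) / F (f x) < ρ, w x
      = ∑ b ∈ univ.image f, ∑ x with f x = b, (if p x ∧ H b / F b < ρ then w x else 0) := by
        rw [sum_filter, ← sum_fiberwise_of_maps_to fun x _ => mem_image_of_mem f (mem_univ x)]
        refine sum_congr rfl fun b _ => sum_congr rfl fun x hx => ?_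
        rw [(mem_filter.mp hx).2]
    _ ≤ ∑ b ∈ univ.image f, ρ * F b := sum_le_sum fun b _ => hfiber b
    _ = ρ * ∑ x, w x := by
        rw [← mul_sum, sum_fiberwise_of_maps_to fun x _ => mem_image_of_mem f (mem_univ x)]

theorem sum_filter_condWeight_lt_le_card_mul (hw : ∀ x, 0 ≤ w x) (f : X → β) {g : X → γ}
    {C : Finset γ} (hg : ∀ x, g x ∈ C) {ρ : ℝ} (hρ : 0 ≤ ρ) :
    ∑ x with (∑ y with f y = f x ∧ g y = g x, w y) / (∑ y with f y = f x, w y) < ρ, w x ≤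
      #C * (ρ * ∑ x, w x) := by
  rw [← sum_fiberwise_of_maps_to fun x _ => hg x, ← nsmul_eq_mul, ← sum_const]
  refine sum_le_sum fun c _ => le_of_eq_of_le ?_ (sum_filter_condWeight_lt_le hw f (g · = c) hρ)
  rw [filter_filter]
  refine sum_congr (filter_congr fun x _ => ?_) fun _ _ => rfl
  constructor
  · rintro ⟨hlt, rfl⟩; exact ⟨rfl, hlt⟩
  · rintro ⟨rfl, hlt⟩; exact ⟨hlt, rfl⟩

end Finset

theorem ProbWeight.prod_nonneg {ι : Type} {Ω : ι → Type} [∀ i, Fintype (Ω i)]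
    (P : ProbWeight Ω) {I : Finset ι} (e : (i : {x // x ∈ I}) → Ω i.1) :
    0 ≤ ∏ i, P.p i.1 (e i) :=
  Finset.prod_nonneg fun _ _ => P.nonneg _ _

section

variable {ι : Type} [DecidableEq ι] {Ω : ι → Type} [∀ i, Fintype (Ω i)]

theorem ProbWeight.sum_prod_eq_one (P : ProbWeight Ω) (I : Finset ι) :
    ∑ e : (i : {x // x ∈ I}) → Ω i.1, ∏ i, P.p i.1 (e i) = 1 := by
  rw [← Fintype.prod_sum]
  simp [P.sum_one]

theorem ProbWeight.nonempty_edges (P : ProbWeight Ω) (I : Finset ι) :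
    Nonempty ((i : {x // x ∈ I}) → Ω i.1) := by
  obtain ⟨e, -, -⟩ := Finset.exists_ne_zero_of_sum_ne_zero (P.sum_prod_eq_one I ▸ one_ne_zero)
  exact ⟨e⟩

theorem probI_eq_sum_filter (P : ProbWeight Ω) (I : Finset ι)
    (A : ((i : {x // x ∈ I}) → Ω i.1) → Prop) :
    probI P I A = ∑ e with A e, ∏ i, P.p i.1 (e i) := by
  simp only [probI, mul_ite, mul_one, mul_zero, Finset.sum_filter]

theorem probI_or_le (P : ProbWeight Ω) (I : Finset ι)
    (A B : ((i : {x // x ∈ I}) → Ω i.1) → Prop) :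
    probI P I (fun e => A e ∨ B e) ≤ probI P I A + probI P I B := by
  simp only [probI_eq_sum_filter]
  calc _ = ∑ e ∈ Finset.univ.filter A ∪ Finset.univ.filter B, ∏ i, P.p i.1 (e i) := by
        congr 1; ext; simp
    _ ≤ _ := by
      rw [← Finset.sum_union_inter]
      exact le_add_of_nonneg_right (Finset.sum_nonneg fun e _ => P.prod_nonneg e)

theorem probI_lt_le_of_expI_le (P : ProbWeight Ω) (I : Finset ι)
    {f : ((i : {x // x ∈ I}) → Ω i.1) → ℝ} (hf : ∀ e, 0 ≤ f e) {t α : ℝ} (ht : 0 < t)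
    (hexp : expI P I f ≤ α * t) : probI P I (fun e => t < f e) ≤ α := by
  rw [probI_eq_sum_filter]
  refine le_of_mul_le_mul_left ?_ ht
  calc t * ∑ e with t < f e, ∏ i, P.p i.1 (e i)
      ≤ expI P I f := Finset.mul_sum_filter_lt_le_sum_mul P.prod_nonneg hf t
    _ ≤ t * α := by rwa [mul_comm]

end

section

variable {ι : Type} [Fintype ι] [DecidableEq ι] {Ω : ι → Type} [∀ i, Fintype (Ω i)] {k : ℕ}

theorem PartGraph.tc_self (G : PartGraph ι Ω k) {I : Finset ι} (hI : I.Nonempty)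
    (e : (i : {x // x ∈ I}) → Ω i.1) : G.tc I e I = G.col I e := by
  rw [PartGraph.tc, dif_pos ⟨Finset.Subset.refl I, hI⟩]

def PartGraph.lowerColors (G : PartGraph ι Ω k) (I : Finset ι)
    (e : (i : {x // x ∈ I}) → Ω i.1) : {J : Finset ι // J ⊂ I ∧ J.Nonempty} → ℕ :=
  fun J => G.tc I e J.1

theorem dens_tc_eq (G : PartGraph ι Ω k) (P : ProbWeight Ω) {I : Finset ι} (hI : I.Nonempty)
    (e : (i : {x // x ∈ I}) → Ω i.1) :
    dens G P I (G.tc I e) =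
      (∑ y with G.lowerColors I y = G.lowerColors I e ∧ G.col I y = G.col I e,
          ∏ i, P.p i.1 (y i)) /
        ∑ y with G.lowerColors I y = G.lowerColors I e, ∏ i, P.p i.1 (y i) := by
  have hlower : ∀ y, G.lowerColors I y = G.lowerColors I e ↔
      ∀ J, J ⊂ I → J.Nonempty → G.tc I y J = G.tc I e J := by
    simp [funext_iff, PartGraph.lowerColors]
  simp only [dens, probI_eq_sum_filter, G.tc_self hI, hlower, and_comm]
  congr! 3

theorem probI_dens_tc_lt_le (G : PartGraph ι Ω k) (P : ProbWeight Ω) {I : Finset ι}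
    (hI : I.Nonempty) (hIk : I.card ≤ k) {ρ : ℝ} (hρ : 0 ≤ ρ) :
    probI P I (fun e => dens G P I (G.tc I e) < ρ) ≤ (G.colorSet I).card * ρ := by
  have key := Finset.sum_filter_condWeight_lt_le_card_mul P.prod_nonneg (G.lowerColors I)
    (G.col_mem I hI hIk) hρ
  rw [P.sum_prod_eq_one, mul_one] at key
  rw [probI_eq_sum_filter]
  convert key using 3 with e
  rw [dens_tc_eq G P hI e]
  congr!

theorem card_colorSet_le_maxColors (G : PartGraph ι Ω k) {I : Finset ι} (hI : I.Nonempty)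
    (hIk : I.card ≤ k) : (G.colorSet I).card ≤ maxColors G I.card :=
  Finset.le_sup (f := fun J => (G.colorSet J).card)
    (Finset.mem_filter.mpr ⟨Finset.mem_univ _, hI, le_rfl, hIk⟩)

end

theorem exceptional_edges_rare_general
    (k : ℕ)
    (ι : Type) [Fintype ι] [DecidableEq ι]
    (Ω : ι → Type) [∀ i, Fintype (Ω i)]
    (P : ProbWeight Ω) (Gs : PartGraph ι Ω k)
    (ε : ℕ → ℕ → ℝ) (h : ℕ)
    (δ : Finset ι → (Finset ι → ℕ) → ℝ)
    (hreg : IsRegularWitness Gs P ε h δ)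
    (α : ℝ) (hα : α ∈ Set.Ioo (0:ℝ) 1)
    (bstar : ℕ → ℕ) (hbstar : ∀ i, bstar i = maxColors Gs i)
    (ρ : ℕ → ℝ) (hρ : ∀ i, ρ i = α / (bstar i : ℝ))
    (η : ℕ → ℝ) (hη : ∀ i, 1 ≤ i → i ≤ k → 0 < η i)
    (hεη : ∀ i, 1 ≤ i → i ≤ k → ε i (bstar i) ≤ α * ρ i * η i) :
    ∀ I : Finset ι, I.Nonempty → I.card ≤ k →
      probI P I (fun e =>
          dens Gs P I (Gs.tc I e) < ρ I.card ∨
          δ I (Gs.tc I e) > ρ I.card * η I.card) ≤ 2 * α := by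
  obtain ⟨hδ, -, hexp⟩ := hreg
  intro I hI hIk
  have hC : (Gs.colorSet I).card ≤ bstar I.card :=
    hbstar I.card ▸ card_colorSet_le_maxColors Gs hI hIk
  obtain ⟨e⟩ := P.nonempty_edges I
  have hb : (0 : ℝ) < bstar I.card := by
    exact_mod_cast (Finset.card_pos.mpr ⟨_, Gs.col_mem I hI hIk e⟩).trans_le hC
  have hρ0 : 0 < ρ I.card := by rw [hρ]; exact div_pos hα.1 hb
  have hεα : expI P I (fun e => δ I (Gs.tc I e)) ≤ α * (ρ I.card * η I.card) := by
    rw [← mul_assoc]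
    exact (hbstar I.card ▸ hexp I hI hIk).trans (hεη I.card hI.card_pos hIk)
  calc _ ≤ probI P I (fun e => dens Gs P I (Gs.tc I e) < ρ I.card) +
          probI P I (fun e => ρ I.card * η I.card < δ I (Gs.tc I e)) := probI_or_le _ _ _ _
    _ ≤ α + α := by
      gcongr
      · calc _ ≤ (Gs.colorSet I).card * ρ I.card := probI_dens_tc_lt_le Gs P hI hIk hρ0.le
          _ ≤ bstar I.card * ρ I.card := by gcongr
          _ = α := by rw [hρ, mul_div_cancel₀ _ hb.ne']
      · exact probI_lt_le_of_expI_le P I (fun e => hδ _ _)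
          (mul_pos hρ0 (hη _ hI.card_pos hIk)) hεα
    _ = 2 * α := by ring

/-- **Exceptional edges are rare.**  Let `G*` be `(ε,h)`-regular with witness
`δ`, let `α ∈ (0,1)`, `b_i* = max_{i ≤ |J| ≤ k} |C_J(G*)|`, `ρ_i = α / b_i*`,
and let `η_i > 0` satisfy `ε(i, b_i*) ≤ α · ρ_i · η_i`.  Call `e ∈ Ω_I`
exceptional iff `d_{G*}(G*⟨e⟩) < ρ_{|I|}` or `δ(G*⟨e⟩) > ρ_{|I|}·η_{|I|}`.
Then for every index `I` the probability that a random edge of `Ω_I` is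
exceptional is at most `2α`. -/
theorem exceptional_edges_rare
    (k : ℕ) (hk : 0 < k)
    (ι : Type) [Fintype ι] [DecidableEq ι]
    (Ω : ι → Type) [∀ i, Fintype (Ω i)] [∀ i, Nonempty (Ω i)]
    (P : ProbWeight Ω) (Gs : PartGraph ι Ω k)
    (ε : ℕ → ℕ → ℝ) (h : ℕ) (hh : 0 < h)
    (δ : Finset ι → (Finset ι → ℕ) → ℝ)
    (hreg : IsRegularWitness Gs P ε h δ)
    (α : ℝ) (hα : α ∈ Set.Ioo (0:ℝ) 1)
    (bstar : ℕ → ℕ) (hbstar : ∀ i, bstar i = maxColors Gs i)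
    (ρ : ℕ → ℝ) (hρ : ∀ i, ρ i = α / (bstar i : ℝ))
    (η : ℕ → ℝ) (hη : ∀ i, 1 ≤ i → i ≤ k → 0 < η i)
    (hεη : ∀ i, 1 ≤ i → i ≤ k → ε i (bstar i) ≤ α * ρ i * η i) :
    ∀ I : Finset ι, I.Nonempty → I.card ≤ k →
      probI P I (fun e =>
          dens Gs P I (Gs.tc I e) < ρ I.card ∨
          δ I (Gs.tc I e) > ρ I.card * η I.card) ≤ 2 * α :=
  exceptional_edges_rare_general k ι Ω P Gs ε h δ hreg α hα bstar hbstar ρ hρ η hη hεη
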